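/- arXiv:2302.14423 — 4 statements merged into one kernel-verified Lean document; each statement's English description precedes it below -/
import Mathlib

section
/- Let Θ, Σ be p×p real symmetric positive definite matrices and 0 < α < 1. Define Θ₁ = Θ + αΣ and Θ₂ = Θ + Σ. Then the largest eigenvalue of α·Θ₂^{1/2} Θ₁^{-1} Θ₂^{1/2} is strictly less than 1. -/
open Matrix Pointwise

section Aux

variable {n : Type*} [Fintype n] [DecidableEq n]

lemma posDef_smul {A : Matrix n n ℝ} (hA : A.PosDef) {c : ℝ} (hc : 0 < c) :
    (c • A).PosDef := by
  refine Matrix.PosDef.of_dotProduct_mulVec_pos ?_ fun x hx => ?_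
  · unfold Matrix.IsHermitian
    rw [conjTranspose_smul, hA.1]
    simp
  · rw [smul_mulVec, dotProduct_smul]
    exact smul_pos hc (hA.dotProduct_mulVec_pos hx)

lemma posDef_conj {C B : Matrix n n ℝ} (hC : C.PosDef) (hB : IsUnit B) :
    (Bᴴ * C * B).PosDef := by
  refine Matrix.PosDef.of_dotProduct_mulVec_pos (Matrix.isHermitian_conjTranspose_mul_mul B hC.1) fun x hx => ?_
  have hBx : B *ᵥ x ≠ 0 := by
    intro h
    exact hx (Matrix.mulVec_injective_iff_isUnit.mpr hB (by simpa using h))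
  have key : star x ⬝ᵥ (Bᴴ * C * B) *ᵥ x = star (B *ᵥ x) ⬝ᵥ C *ᵥ (B *ᵥ x) := by
    rw [star_mulVec, mul_assoc, ← mulVec_mulVec, dotProduct_mulVec]
    rw [← mulVec_mulVec]
  rw [key]
  exact hC.dotProduct_mulVec_pos hBx

end Aux

/-- With `Θ, Σ` symmetric positive definite `p × p` matrices, `0 < α < 1`,
`Θ₁ = Θ + α•Σ`, `Θ₂ = Θ + Σ`, and `Q` the (unique) symmetric positive definite square root
of `Θ₂`, every eigenvalue of `α • (Q * Θ₁⁻¹ * Q)` is strictly less than `1`. -/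
theorem stmt2 (p : ℕ) (hp : 0 < p) (α : ℝ) (hα0 : 0 < α) (hα1 : α < 1)
    (Θ Sig : Matrix (Fin p) (Fin p) ℝ) (hΘ : Θ.PosDef) (hSig : Sig.PosDef)
    (Θ₁ Θ₂ : Matrix (Fin p) (Fin p) ℝ) (hΘ₁ : Θ₁ = Θ + α • Sig) (hΘ₂ : Θ₂ = Θ + Sig)
    (Q : Matrix (Fin p) (Fin p) ℝ) (hQ : Q.PosDef) (hQsq : Q * Q = Θ₂) :
    ∀ μ ∈ spectrum ℝ (α • (Q * Θ₁⁻¹ * Q)), μ < 1 := by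
  intro μ hμ
  -- positive definiteness facts
  have hΘ₁pd : Θ₁.PosDef := by
    rw [hΘ₁]; exact hΘ.add (posDef_smul hSig hα0)
  have hΘ₂pd : Θ₂.PosDef := by rw [hΘ₂]; exact hΘ.add hSig
  have hΘ₁u : IsUnit Θ₁ := hΘ₁pd.isUnit
  have hΘ₂u : IsUnit Θ₂ := hΘ₂pd.isUnit
  have hQu : IsUnit Q := hQ.isUnit
  haveI := hΘ₁u.invertible
  haveI := hΘ₂u.invertible
  haveI := hQu.invertible
  -- E = (1-α)Θ
  set E : Matrix (Fin p) (Fin p) ℝ := (1 - α) • Θ with hE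
  have hEpd : E.PosDef := posDef_smul hΘ (by linarith)
  have hΘ₁split : Θ₁ = α • Θ₂ + E := by
    rw [hΘ₁, hΘ₂, hE]
    simp only [smul_add, smul_smul, sub_smul, one_smul]
    abel
  -- D = Θ₁ Θ₂⁻¹ Θ₁ - α Θ₁ = α E + E Θ₂⁻¹ E
  have hD : Θ₁ * Θ₂⁻¹ * Θ₁ - α • Θ₁ = α • E + Eᴴ * Θ₂⁻¹ * E := by
    have hEH : Eᴴ = E := hEpd.1
    rw [hEH]
    rw [hΘ₁split]
    have h1 : (α • Θ₂ + E) * Θ₂⁻¹ = α • 1 + E * Θ₂⁻¹ := by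
      rw [add_mul, smul_mul_assoc, mul_nonsing_inv _ ((isUnit_iff_isUnit_det _).mp hΘ₂u)]
    rw [h1]
    have h2 : (α • 1 + E * Θ₂⁻¹) * (α • Θ₂ + E) =
        (α * α) • Θ₂ + α • E + α • E + E * Θ₂⁻¹ * E := by
      rw [add_mul, mul_add, mul_add]
      have : E * Θ₂⁻¹ * (α • Θ₂) = α • E := by
        rw [mul_smul_comm, mul_assoc, nonsing_inv_mul _ ((isUnit_iff_isUnit_det _).mp hΘ₂u),
          mul_one]
      rw [this]
      simp only [smul_mul_assoc, one_mul, mul_smul_comm, smul_smul]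
      abel
    rw [h2]
    simp only [smul_add, smul_smul]
    abel
  have hDpd : (Θ₁ * Θ₂⁻¹ * Θ₁ - α • Θ₁).PosDef := by
    rw [hD]
    exact (posDef_smul hEpd hα0).add (posDef_conj hΘ₂pd.inv hEpd.isUnit)
  -- C = Θ₂⁻¹ - α Θ₁⁻¹ = Θ₁⁻¹ D Θ₁⁻¹
  have hC : Θ₂⁻¹ - α • Θ₁⁻¹ = (Θ₁⁻¹)ᴴ * (Θ₁ * Θ₂⁻¹ * Θ₁ - α • Θ₁) * Θ₁⁻¹ := by
    have hdet : IsUnit Θ₁.det := (isUnit_iff_isUnit_det _).mp hΘ₁u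
    have hH : (Θ₁⁻¹)ᴴ = Θ₁⁻¹ := hΘ₁pd.inv.1
    rw [hH, mul_sub, sub_mul]
    rw [show Θ₁⁻¹ * (Θ₁ * Θ₂⁻¹ * Θ₁) = Θ₂⁻¹ * Θ₁ by
      rw [← mul_assoc, ← mul_assoc, nonsing_inv_mul _ hdet, one_mul]]
    rw [mul_assoc, mul_nonsing_inv _ hdet, mul_one]
    rw [mul_smul_comm, nonsing_inv_mul _ hdet, smul_mul_assoc, one_mul]
  have hCpd : (Θ₂⁻¹ - α • Θ₁⁻¹).PosDef := by
    rw [hC]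
    exact posDef_conj hDpd hΘ₁pd.inv.isUnit
  -- 1 - α Q Θ₁⁻¹ Q = Q C Q
  have hQH : Qᴴ = Q := hQ.1
  have hdetQ : IsUnit Q.det := (isUnit_iff_isUnit_det _).mp hQu
  have hone : Q * Θ₂⁻¹ * Q = 1 := by
    rw [← hQsq, Matrix.mul_inv_rev, ← mul_assoc, mul_nonsing_inv _ hdetQ, one_mul,
      nonsing_inv_mul _ hdetQ]
  have hkey : (1 : Matrix (Fin p) (Fin p) ℝ) - α • (Q * Θ₁⁻¹ * Q) =
      Qᴴ * (Θ₂⁻¹ - α • Θ₁⁻¹) * Q := by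
    rw [hQH, mul_sub, sub_mul, hone]
    congr 1
    simp only [mul_smul_comm, smul_mul_assoc, mul_assoc]
  have hMpd : ((1 : Matrix (Fin p) (Fin p) ℝ) - α • (Q * Θ₁⁻¹ * Q)).PosDef := by
    rw [hkey]
    exact posDef_conj hCpd hQu
  -- spectrum argument
  have h1μ : (1 : ℝ) - μ ∈ spectrum ℝ ((1 : Matrix (Fin p) (Fin p) ℝ) - α • (Q * Θ₁⁻¹ * Q)) := by
    have := spectrum.singleton_sub_eq (α • (Q * Θ₁⁻¹ * Q)) (1 : ℝ)
    have hmem : (1 : ℝ) - μ ∈ ({(1 : ℝ)} : Set ℝ) - spectrum ℝ (α • (Q * Θ₁⁻¹ * Q)) :=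
      Set.sub_mem_sub rfl hμ
    rw [this] at hmem
    simpa using hmem
  rw [hMpd.1.spectrum_real_eq_range_eigenvalues] at h1μ
  obtain ⟨i, hi⟩ := h1μ
  have := hMpd.eigenvalues_pos i
  rw [hi] at this
  linarith
end

section
/- Let Θ, Σ be p×p real symmetric positive definite matrices, 0 < α < 1, Θ₁ = Θ + αΣ, Θ₂ = Θ + Σ. Then for every nonzero vector ρ ∈ ℝᵖ, the ratio B² = α² · (ρ' Θ₂^{1/2} Θ₁^{-1} Θ₂ Θ₁^{-1} Θ₂^{1/2} ρ) / (ρ'ρ) satisfies 0 < B² < 1. -/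
open Matrix

section helpers

variable {n : Type*} [Fintype n] [DecidableEq n]

lemma my_smul_posDef {c : ℝ} {A : Matrix n n ℝ} (hc : 0 < c) (hA : A.PosDef) :
    (c • A).PosDef := by
  refine PosDef.of_dotProduct_mulVec_pos ?_ (fun x hx => ?_)
  · unfold Matrix.IsHermitian
    rw [conjTranspose_smul, star_trivial, hA.1.eq]
  · rw [smul_mulVec, dotProduct_smul, smul_eq_mul]
    exact mul_pos hc (hA.dotProduct_mulVec_pos hx)

lemma my_conj_posDef {A B : Matrix n n ℝ} (hA : A.PosDef) (hB : IsUnit B) :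
    (Bᴴ * A * B).PosDef := by
  refine PosDef.of_dotProduct_mulVec_pos (isHermitian_conjTranspose_mul_mul B hA.1) (fun x hx => ?_)
  have hinj : Function.Injective (B.mulVec) := Matrix.mulVec_injective_iff_isUnit.mpr hB
  have hx' : B *ᵥ x ≠ 0 := by
    intro h
    exact hx (hinj (by simpa using h))
  simpa only [star_mulVec, dotProduct_mulVec, vecMul_vecMul] using hA.dotProduct_mulVec_pos hx'

lemma my_conj_posDef' {A B : Matrix n n ℝ} (hA : A.PosDef) (hBh : B.IsHermitian)
    (hB : IsUnit B) : (B * A * B).PosDef := by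
  have := my_conj_posDef hA hB
  rwa [hBh.eq] at this

end helpers

/-- With `Θ, Σ` symmetric positive definite, `0 < α < 1`, `Θ₁ = Θ + α•Σ`,
`Θ₂ = Θ + Σ`, `Q` the symmetric positive definite square root of `Θ₂`, for every nonzero
`ρ ∈ ℝᵖ` the ratio `B² = α²·(ρ'QΘ₁⁻¹Θ₂Θ₁⁻¹Qρ)/(ρ'ρ)` satisfies `0 < B² < 1`. -/
theorem stmt3 (p : ℕ) (hp : 0 < p) (α : ℝ) (hα0 : 0 < α) (hα1 : α < 1)
    (Θ Sig : Matrix (Fin p) (Fin p) ℝ) (hΘ : Θ.PosDef) (hSig : Sig.PosDef)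
    (Θ₁ Θ₂ : Matrix (Fin p) (Fin p) ℝ) (hΘ₁ : Θ₁ = Θ + α • Sig) (hΘ₂ : Θ₂ = Θ + Sig)
    (Q : Matrix (Fin p) (Fin p) ℝ) (hQ : Q.PosDef) (hQsq : Q * Q = Θ₂)
    (ρ : Fin p → ℝ) (hρ : ρ ≠ 0) :
    0 < α ^ 2 * (ρ ⬝ᵥ (Q * Θ₁⁻¹ * Θ₂ * Θ₁⁻¹ * Q) *ᵥ ρ) / (ρ ⬝ᵥ ρ) ∧
    α ^ 2 * (ρ ⬝ᵥ (Q * Θ₁⁻¹ * Θ₂ * Θ₁⁻¹ * Q) *ᵥ ρ) / (ρ ⬝ᵥ ρ) < 1 := by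
  -- basic positive definiteness facts
  have hΘ₁pd : Θ₁.PosDef := by
    rw [hΘ₁]; exact hΘ.add (my_smul_posDef hα0 hSig)
  have hΘ₂pd : Θ₂.PosDef := by
    rw [hΘ₂]; exact hΘ.add hSig
  have hN : (Θ₁⁻¹).PosDef := hΘ₁pd.inv
  have hΘ₂i : (Θ₂⁻¹).PosDef := hΘ₂pd.inv
  have hΘ₁u : IsUnit Θ₁ := hΘ₁pd.isUnit
  have hΘ₂u : IsUnit Θ₂ := hΘ₂pd.isUnit
  have hQu : IsUnit Q := hQ.isUnit
  have hNu : IsUnit (Θ₁⁻¹) := hN.isUnit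
  have h21 : Θ₂⁻¹ * Θ₂ = 1 := nonsing_inv_mul _ (hΘ₂pd.det_pos.ne'.isUnit)
  have h22 : Θ₂ * Θ₂⁻¹ = 1 := mul_nonsing_inv _ (hΘ₂pd.det_pos.ne'.isUnit)
  have h11 : Θ₁⁻¹ * Θ₁ = 1 := nonsing_inv_mul _ (hΘ₁pd.det_pos.ne'.isUnit)
  have h12 : Θ₁ * Θ₁⁻¹ = 1 := mul_nonsing_inv _ (hΘ₁pd.det_pos.ne'.isUnit)
  -- the matrix C = Θ₁ - α•Θ₂ = (1-α)•Θ
  set C : Matrix (Fin p) (Fin p) ℝ := (1 - α) • Θ with hCdef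
  have hC : Θ₁ = α • Θ₂ + C := by
    rw [hΘ₁, hΘ₂, hCdef]; module
  have hCpd : C.PosDef := my_smul_posDef (by linarith) hΘ
  have hCu : IsUnit C := hCpd.isUnit
  -- key identity
  have hE : Θ₁ * Θ₂⁻¹ * Θ₁ = C * Θ₂⁻¹ * C + (2 * α) • C + (α ^ 2) • Θ₂ := by
    rw [hC]
    simp only [Matrix.add_mul, Matrix.mul_add, Matrix.smul_mul, Matrix.mul_smul, h21, h22,
      smul_smul, Matrix.mul_one, Matrix.one_mul, Matrix.mul_assoc]
    module
  have hEpd : (C * Θ₂⁻¹ * C + (2 * α) • C).PosDef :=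
    (my_conj_posDef' hΘ₂i hCpd.isHermitian hCu).add (my_smul_posDef (by linarith) hCpd)
  -- conjugate by Θ₁⁻¹
  have hA : Θ₁⁻¹ * (C * Θ₂⁻¹ * C + (2 * α) • C) * Θ₁⁻¹
      = Θ₂⁻¹ - (α ^ 2) • (Θ₁⁻¹ * Θ₂ * Θ₁⁻¹) := by
    have : C * Θ₂⁻¹ * C + (2 * α) • C = Θ₁ * Θ₂⁻¹ * Θ₁ - (α ^ 2) • Θ₂ := by
      rw [hE]; abel
    rw [this]
    rw [Matrix.mul_sub, Matrix.sub_mul, Matrix.mul_smul, Matrix.smul_mul]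
    congr 1
    rw [show Θ₁⁻¹ * (Θ₁ * Θ₂⁻¹ * Θ₁) = (Θ₁⁻¹ * Θ₁) * Θ₂⁻¹ * Θ₁ by
      simp [Matrix.mul_assoc], h11, Matrix.one_mul, Matrix.mul_assoc, h12, Matrix.mul_one]
  have hApd : (Θ₂⁻¹ - (α ^ 2) • (Θ₁⁻¹ * Θ₂ * Θ₁⁻¹)).PosDef := by
    rw [← hA]; exact my_conj_posDef' hEpd hN.isHermitian hNu
  -- conjugate by Q
  have hQ2i : Q * Θ₂⁻¹ * Q = 1 := by
    rw [← hQsq, Matrix.mul_inv_rev]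
    rw [show Q * (Q⁻¹ * Q⁻¹) * Q = Q * Q⁻¹ * (Q⁻¹ * Q) by simp [Matrix.mul_assoc]]
    rw [mul_nonsing_inv _ (hQ.det_pos.ne'.isUnit), nonsing_inv_mul _ (hQ.det_pos.ne'.isUnit),
      Matrix.one_mul]
  have hGpd : ((1 : Matrix (Fin p) (Fin p) ℝ)
      - (α ^ 2) • (Q * Θ₁⁻¹ * Θ₂ * Θ₁⁻¹ * Q)).PosDef := by
    have h := my_conj_posDef' hApd hQ.isHermitian hQu
    have heq : Q * (Θ₂⁻¹ - (α ^ 2) • (Θ₁⁻¹ * Θ₂ * Θ₁⁻¹)) * Q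
        = 1 - (α ^ 2) • (Q * Θ₁⁻¹ * Θ₂ * Θ₁⁻¹ * Q) := by
      rw [Matrix.mul_sub, Matrix.sub_mul, hQ2i, Matrix.mul_smul, Matrix.smul_mul]
      congr 2
      simp [Matrix.mul_assoc]
    rwa [heq] at h
  -- the middle matrix is positive definite
  have hKpd : (Q * Θ₁⁻¹ * Θ₂ * Θ₁⁻¹ * Q).PosDef := by
    have h1 : (Θ₁⁻¹ * Θ₂ * Θ₁⁻¹).PosDef := my_conj_posDef' hΘ₂pd hN.isHermitian hNu
    have h2 := my_conj_posDef' h1 hQ.isHermitian hQu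
    have : Q * (Θ₁⁻¹ * Θ₂ * Θ₁⁻¹) * Q = Q * Θ₁⁻¹ * Θ₂ * Θ₁⁻¹ * Q := by
      simp [Matrix.mul_assoc]
    rwa [this] at h2
  -- numeric conclusions
  have hd : 0 < ρ ⬝ᵥ ρ := by
    have := dotProduct_star_self_pos_iff (v := ρ) |>.mpr hρ
    simpa using this
  have hnum : 0 < ρ ⬝ᵥ (Q * Θ₁⁻¹ * Θ₂ * Θ₁⁻¹ * Q) *ᵥ ρ := by
    have := hKpd.dotProduct_mulVec_pos hρ
    simpa using this
  have hlt : α ^ 2 * (ρ ⬝ᵥ (Q * Θ₁⁻¹ * Θ₂ * Θ₁⁻¹ * Q) *ᵥ ρ) < ρ ⬝ᵥ ρ := by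
    have := hGpd.dotProduct_mulVec_pos hρ
    simp only [star_trivial, sub_mulVec, one_mulVec, smul_mulVec, dotProduct_sub,
      dotProduct_smul, smul_eq_mul] at this
    linarith
  constructor
  · exact div_pos (mul_pos (by positivity) hnum) hd
  · rw [div_lt_one hd]; exact hlt
end

section
/- Let α ∈ (0,1), ω ≥ α², m ≥ σ⁴ > 0 (interpreting m = E[v₁⁴], σ⁴ = (E[v₁²])², so m ≥ σ⁴ by Jensen). Define σ_F² = ((ω−α²)m + (2α−3ω+α²)σ⁴)/(α²(1−α)²σ⁴) and σ_{F_c}² = 2/(α(1−α)). If m < 3σ⁴ then σ_{F_c}² ≥ σ_F², and if m > 3σ⁴ then σ_{F_c}² ≤ σ_F²; in either case equality holds if and only if ω = α². -/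
/-- With `α ∈ (0,1)`, `ω ≥ α²`, `m ≥ σ⁴ > 0`,
`σ_F² = ((ω−α²)m + (2α−3ω+α²)σ⁴)/(α²(1−α)²σ⁴)` and `σ_{F_c}² = 2/(α(1−α))`:
if `m < 3σ⁴` then `σ_{F_c}² ≥ σ_F²`; if `m > 3σ⁴` then `σ_{F_c}² ≤ σ_F²`; and in either
case equality holds iff `ω = α²`. -/
theorem stmt12 (α ω m σ4 : ℝ) (hα0 : 0 < α) (hα1 : α < 1)
    (hω : α ^ 2 ≤ ω) (hσ4 : 0 < σ4) (hm : σ4 ≤ m)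
    (σF2 σFc2 : ℝ)
    (hσF2 : σF2 = ((ω - α ^ 2) * m + (2 * α - 3 * ω + α ^ 2) * σ4) / (α ^ 2 * (1 - α) ^ 2 * σ4))
    (hσFc2 : σFc2 = 2 / (α * (1 - α)))
    (hpos : 0 < σF2) :
    (m < 3 * σ4 → σF2 ≤ σFc2 ∧ (σF2 = σFc2 ↔ ω = α ^ 2)) ∧
    (3 * σ4 < m → σFc2 ≤ σF2 ∧ (σFc2 = σF2 ↔ ω = α ^ 2)) := by
  have h1 : 0 < 1 - α := by linarith
  have hD : 0 < α ^ 2 * (1 - α) ^ 2 * σ4 := by positivity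
  have key : σFc2 - σF2 = (ω - α ^ 2) * (3 * σ4 - m) / (α ^ 2 * (1 - α) ^ 2 * σ4) := by
    rw [hσF2, hσFc2]
    field_simp
    ring
  constructor
  · intro hlt
    have h3 : 0 < 3 * σ4 - m := by linarith
    have hnum : 0 ≤ (ω - α ^ 2) * (3 * σ4 - m) := mul_nonneg (by linarith) h3.le
    have hle : σF2 ≤ σFc2 := by nlinarith [div_nonneg hnum hD.le]
    refine ⟨hle, ?_, ?_⟩
    · intro heq
      have h0 : (ω - α ^ 2) * (3 * σ4 - m) / (α ^ 2 * (1 - α) ^ 2 * σ4) = 0 := by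
        rw [← key, heq]; ring
      have : (ω - α ^ 2) * (3 * σ4 - m) = 0 := by
        rcases div_eq_zero_iff.mp h0 with h | h
        · exact h
        · exact absurd h hD.ne'
      nlinarith
    · intro h
      have : σFc2 - σF2 = 0 := by rw [key, h]; ring
      linarith
  · intro hgt
    have h3 : 3 * σ4 - m < 0 := by linarith
    have hnum : (ω - α ^ 2) * (3 * σ4 - m) ≤ 0 := mul_nonpos_of_nonneg_of_nonpos (by linarith) h3.le
    have hle : σFc2 ≤ σF2 := by nlinarith [div_nonpos_of_nonpos_of_nonneg hnum hD.le]
    refine ⟨hle, ?_, ?_⟩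
    · intro heq
      have h0 : (ω - α ^ 2) * (3 * σ4 - m) / (α ^ 2 * (1 - α) ^ 2 * σ4) = 0 := by
        rw [← key, heq]; ring
      have : (ω - α ^ 2) * (3 * σ4 - m) = 0 := by
        rcases div_eq_zero_iff.mp h0 with h | h
        · exact h
        · exact absurd h hD.ne'
      nlinarith
    · intro h
      have : σFc2 - σF2 = 0 := by rw [key, h]; ring
      linarith
end

section
/- In the case Θ diagonal with p = 2: let Σ = diag(s₁, s₂) with s₁, s₂ > 0, and let the errors v_i ∈ ℝ² be i.i.d. N(0, Σ). Then for the two quadratic-form entries, the limiting variance expression σ₀² = (1−α)^{-2}·vec(Σ^{-1})'·(α^{-2}Σ₂ − Σ₁)·vec(Σ^{-1}) with Σ₁, Σ₂ as in Lemma 4.2 of the paper evaluated for Gaussian errors and ω = α², simplifies to 4/(α(1−α)). -/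
open Finset

/-- `p = 2`, Gaussian errors `v₁ ~ N(0, diag(s₁,s₂))`, balanced instruments
(`ω = α²`). With `C a b = E[v₁ₐv₁_b]` the diagonal covariance, `m a b c d = E[v₁ₐv₁_bv₁_cv₁_d]`
the Gaussian fourth moment (Isserlis), `S1` and `S2` the covariance matrices of Lemma 4.2
indexed by the `p² = 4` ordered pairs, and `vec(Σ⁻¹)` the vectorized inverse covariance,
the limiting variance `σ₀² = (1−α)⁻²·vec(Σ⁻¹)'(α⁻²S2 − S1)vec(Σ⁻¹)` equals `4/(α(1−α))`. -/
theorem stmt16 (α : ℝ) (hα0 : 0 < α) (hα1 : α < 1)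
    (s : Fin 2 → ℝ) (hs : ∀ j, 0 < s j)
    (C : Fin 2 → Fin 2 → ℝ) (hC : ∀ a b, C a b = if a = b then s a else 0)
    (m : Fin 2 → Fin 2 → Fin 2 → Fin 2 → ℝ)
    (hm : ∀ a b c d, m a b c d = C a b * C c d + C a c * C b d + C a d * C b c)
    (ω : ℝ) (hω : ω = α ^ 2)
    (S1 S2 : (Fin 2 × Fin 2) → (Fin 2 × Fin 2) → ℝ)
    (hS1 : ∀ i j, S1 i j = m i.1 i.2 j.1 j.2 - C i.1 i.2 * C j.1 j.2)
    (hS2 : ∀ i j, S2 i j = ω * S1 i j +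
      (α - ω) * (C i.1 j.1 * C i.2 j.2 + C i.1 j.2 * C j.2 i.2))
    (vecinv : (Fin 2 × Fin 2) → ℝ)
    (hvec : ∀ i, vecinv i = if i.1 = i.2 then (s i.1)⁻¹ else 0)
    (σ02 : ℝ)
    (hσ02 : σ02 = (1 - α) ^ (-2 : ℤ) *
      ∑ i, ∑ j, vecinv i * (α ^ (-2 : ℤ) * S2 i j - S1 i j) * vecinv j) :
    σ02 = 4 / (α * (1 - α)) := by
  have hs0 := (hs 0).ne'
  have hs1 := (hs 1).ne'
  have hα := hα0.ne'
  have h1α : (1 - α) ≠ 0 := by linarith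
  subst hσ02 hω
  simp only [Fintype.sum_prod_type, Fin.sum_univ_two, hS2, hS1, hm, hC, hvec]
  norm_num [Fin.ext_iff]
  field_simp
  ring
end
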